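/- Let 0 < a ≤ 1/2, Ω = {0,1}^ℕ with Bernoulli product measure ν_a, and g the dyadic odometer. Then the Radon–Nikodym derivative of g^{-1}_*(ν_a) with respect to ν_a is essentially bounded, with ‖dg^{-1}(ν_a)/dν_a‖_∞ ≤ (1-a)/a. -/

import Mathlib

/-!
On the set of sequences whose first `false` sits at position `j` (`j` leading ones, then a zero),
`odometer` replaces the prefix `1^j 0` by `0^j 1` and leaves the tail alone, so on cylinders
inside that set the measure `ν ∘ odometer = ν.map odometerInv` is `ν` rescaled by
`(a^j (1-a)) / ((1-a)^j a) = (a/(1-a))^(j-1)`. A cylinder with an all-ones prefix meets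
infinitely many of these sets, and there the two sides agree by summing a geometric series.
Prefix cylinders form a generating π-system, so `ν.map odometerInv` is `ν` with this piecewise
constant density, which is at most `(1-a)/a` because `a ≤ 1/2`.
-/

open MeasureTheory Filter Topology ENNReal

/-- The dyadic odometer ("addition of `(1,0,0,...)` with carry to the right") on `{0,1}^ℕ`:
it flips the `n`-th bit exactly when all earlier bits equal `1`. -/
def odometer (x : ℕ → Bool) : ℕ → Bool :=
  fun n => if ∀ k < n, x k = true then !(x n) else x n

/-- The inverse of the dyadic odometer ("subtraction of `1` with borrow"). -/
def odometerInv (x : ℕ → Bool) : ℕ → Bool :=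
  fun n => if ∀ k < n, x k = false then !(x n) else x n

/-- `ν` is the Bernoulli product measure `⊗_{n} (a δ_0 + (1-a) δ_1)` on `{0,1}^ℕ`
(identifying `0` with `false` and `1` with `true`): it is a probability measure giving each
cylinder set determined by the first `n` coordinates its product measure. -/
def IsBernoulliProd (a : ℝ) (ν : Measure (ℕ → Bool)) : Prop :=
  IsProbabilityMeasure ν ∧
    ∀ (n : ℕ) (s : Fin n → Bool),
      ν {x | ∀ i : Fin n, x i = s i} =
        ∏ i : Fin n, ENNReal.ofReal (if s i then 1 - a else a)

/-- The total variation distance `‖μ - ν‖` of two (finite) measures. -/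
noncomputable def tvDist {Ω : Type*} [MeasurableSpace Ω] (μ ν : Measure Ω) : ℝ≥0∞ :=
  (μ - ν) Set.univ + (ν - μ) Set.univ

-- `odometer = flipAfterRun true` and `odometerInv = flipAfterRun false` hold by `rfl`.
def flipAfterRun (b : Bool) (x : ℕ → Bool) : ℕ → Bool :=
  fun n => if ∀ k < n, x k = b then !(x n) else x n

section FlipAfterRun

variable {b : Bool}

lemma flipAfterRun_eq_of_eqOn_prefix {x y : ℕ → Bool} {n : ℕ} (h : ∀ i < n, x i = y i) :
    ∀ i < n, flipAfterRun b x i = flipAfterRun b y i := by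
  intro i hi
  have hrun : (∀ k < i, x k = b) ↔ (∀ k < i, y k = b) :=
    forall₂_congr fun k hk => by rw [h k (hk.trans hi)]
  simp only [flipAfterRun, hrun, h i hi]

lemma flipAfterRun_run_iff (x : ℕ → Bool) (n : ℕ) :
    (∀ k < n, flipAfterRun b x k = !b) ↔ ∀ k < n, x k = b := by
  induction n with
  | zero => simp
  | succ n ih =>
    simp only [Nat.forall_lt_succ_right, ih]
    exact and_congr_right fun hrun => by rw [flipAfterRun, if_pos hrun, Bool.not_inj_iff]

lemma flipAfterRun_not_flipAfterRun (x : ℕ → Bool) :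
    flipAfterRun (!b) (flipAfterRun b x) = x := by
  funext n
  have hrun := flipAfterRun_run_iff (b := b) x n
  by_cases hx : ∀ k < n, x k = b
  · rw [flipAfterRun, if_pos (hrun.2 hx), flipAfterRun, if_pos hx, Bool.not_not]
  · rw [flipAfterRun, if_neg (hrun.not.2 hx), flipAfterRun, if_neg hx]

end FlipAfterRun

lemma odometer_odometerInv (x : ℕ → Bool) : odometer (odometerInv x) = x :=
  flipAfterRun_not_flipAfterRun (b := false) x

lemma odometerInv_odometer (x : ℕ → Bool) : odometerInv (odometer x) = x :=
  flipAfterRun_not_flipAfterRun (b := true) x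

lemma odometer_apply_of_forall_lt {x : ℕ → Bool} {n : ℕ} (h : ∀ k < n, x k = true) :
    odometer x n = !(x n) :=
  if_pos h

lemma odometer_apply_of_not_forall_lt {x : ℕ → Bool} {n : ℕ} (h : ¬ ∀ k < n, x k = true) :
    odometer x n = x n :=
  if_neg h

def prefixCylinder (n : ℕ) (s : ℕ → Bool) : Set (ℕ → Bool) := {x | ∀ i < n, x i = s i}

def prefixCylinders : Set (Set (ℕ → Bool)) := {S | ∃ n s, prefixCylinder n s = S}

lemma measurableSet_prefixCylinder (n : ℕ) (s : ℕ → Bool) :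
    MeasurableSet (prefixCylinder n s) := by
  have h : prefixCylinder n s =
      ⋂ i ∈ Finset.range n, (fun x : ℕ → Bool => x i) ⁻¹' {s i} := by
    ext x; simp [prefixCylinder]
  rw [h]
  exact Finset.measurableSet_biInter _ fun i _ =>
    measurable_pi_apply i (measurableSet_singleton (s i))

lemma prefixCylinder_subset_of_le {m n : ℕ} {s t : ℕ → Bool} (hmn : m ≤ n)
    (hst : ∀ i < m, s i = t i) : prefixCylinder n t ⊆ prefixCylinder m s :=
  fun _ hx i hi => (hx i (hi.trans_le hmn)).trans (hst i hi).symm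

lemma isPiSystem_prefixCylinders : IsPiSystem prefixCylinders := by
  rintro _ ⟨m, s, rfl⟩ _ ⟨n, t, rfl⟩ ⟨x, hxs, hxt⟩
  rcases le_total m n with hmn | hnm
  · refine ⟨n, t, (Set.inter_eq_self_of_subset_right ?_).symm⟩
    exact prefixCylinder_subset_of_le hmn fun i hi =>
      (hxs i hi).symm.trans (hxt i (hi.trans_le hmn))
  · refine ⟨m, s, (Set.inter_eq_self_of_subset_left ?_).symm⟩
    exact prefixCylinder_subset_of_le hnm fun i hi =>
      (hxt i hi).symm.trans (hxs i (hi.trans_le hnm))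

lemma setOf_apply_eq_iUnion_prefixCylinder (i : ℕ) (b : Bool) :
    {x : ℕ → Bool | x i = b} =
      ⋃ t : Fin i → Bool,
        prefixCylinder (i + 1) (fun j => if h : j < i then t ⟨j, h⟩ else b) := by
  ext x
  simp only [Set.mem_iUnion, prefixCylinder, Nat.forall_lt_succ_right,
    lt_irrefl, dite_false]
  constructor
  · intro hx
    exact ⟨fun j => x j, fun j hj => by simp [hj], hx⟩
  · rintro ⟨_, -, hx⟩
    exact hx

lemma generateFrom_prefixCylinders :
    MeasurableSpace.generateFrom prefixCylinders =
      (inferInstance : MeasurableSpace (ℕ → Bool)) := by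
  refine le_antisymm (MeasurableSpace.generateFrom_le ?_) (iSup_le fun i => ?_)
  · rintro _ ⟨n, s, rfl⟩
    exact measurableSet_prefixCylinder n s
  · refine measurable_iff_comap_le.mp
      (@measurable_to_countable' _ _ _ _ (.generateFrom prefixCylinders) _ fun b => ?_)
    rw [show (fun x : ℕ → Bool => x i) ⁻¹' {b} = {x | x i = b} from rfl,
      setOf_apply_eq_iUnion_prefixCylinder]
    exact MeasurableSet.iUnion fun _ => MeasurableSpace.measurableSet_generateFrom ⟨_, _, rfl⟩

lemma preimage_odometerInv_prefixCylinder (n : ℕ) (s : ℕ → Bool) :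
    odometerInv ⁻¹' prefixCylinder n s = prefixCylinder n (odometer s) := by
  ext x
  constructor
  · intro hx
    rw [← odometer_odometerInv x]
    exact flipAfterRun_eq_of_eqOn_prefix hx
  · intro hx
    rw [Set.mem_preimage, ← odometerInv_odometer s]
    exact flipAfterRun_eq_of_eqOn_prefix hx

lemma measurable_odometerInv : Measurable odometerInv := by
  refine measurable_pi_lambda _ fun n => Measurable.ite ?_ ?_ (measurable_pi_apply n)
  · exact measurableSet_prefixCylinder n fun _ => false
  · exact (measurable_from_top (f := Bool.not)).comp (measurable_pi_apply n)

lemma ENNReal.tsum_ite_le_pow_mul_one_sub {q : ℝ≥0∞} (hq : q < 1) (n : ℕ) :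
    ∑' j, (if n ≤ j then q ^ j * (1 - q) else 0) = q ^ n := by
  rw [← ENNReal.summable.sum_add_tsum_nat_add' (k := n),
    Finset.sum_eq_zero fun j hj => if_neg (by simpa using hj), zero_add]
  simp_rw [if_pos (Nat.le_add_left n _), pow_add, mul_comm (_ ^ _) (q ^ n), mul_assoc]
  rw [ENNReal.tsum_mul_left, ENNReal.tsum_mul_right, ENNReal.tsum_geometric,
    ENNReal.inv_mul_cancel (tsub_pos_of_lt hq).ne' (by simp), mul_one]

noncomputable def bernoulliWeight (a : ℝ) (b : Bool) : ℝ≥0∞ :=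
  ENNReal.ofReal (if b then 1 - a else a)

lemma prod_range_bernoulliWeight_of_eq {a : ℝ} {t : ℕ → Bool} {b : Bool} {m : ℕ}
    (h : ∀ i < m, t i = b) :
    ∏ i ∈ Finset.range m, bernoulliWeight a (t i) = bernoulliWeight a b ^ m := by
  rw [Finset.prod_congr rfl fun i hi => by rw [h i (Finset.mem_range.1 hi)], Finset.prod_const,
    Finset.card_range]

lemma IsBernoulliProd.measure_prefixCylinder {a : ℝ} {ν : Measure (ℕ → Bool)}
    (hν : IsBernoulliProd a ν) (n : ℕ) (s : ℕ → Bool) :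
    ν (prefixCylinder n s) = ∏ i ∈ Finset.range n, bernoulliWeight a (s i) := by
  have h : prefixCylinder n s = {x | ∀ i : Fin n, x i = s i} :=
    Set.ext fun x => ⟨fun hx i => hx i i.isLt, fun hx i hi => hx ⟨i, hi⟩⟩
  rw [h, hν.2 n]
  exact Fin.prod_univ_eq_prod_range (fun i => bernoulliWeight a (s i)) n

def firstFalseAt (j : ℕ) : Set (ℕ → Bool) := {x | (∀ k < j, x k = true) ∧ x j = false}

lemma firstFalseAt_eq_prefixCylinder (j : ℕ) :
    firstFalseAt j = prefixCylinder (j + 1) (fun k => decide (k < j)) := by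
  ext x
  simp only [firstFalseAt, prefixCylinder, Set.mem_ofPred_eq, Nat.forall_lt_succ_right, lt_irrefl,
    decide_false]
  exact and_congr_left' (forall₂_congr fun k hk => by rw [decide_eq_true hk])

lemma measurableSet_firstFalseAt (j : ℕ) : MeasurableSet (firstFalseAt j) := by
  rw [firstFalseAt_eq_prefixCylinder]
  exact measurableSet_prefixCylinder _ _

lemma eq_of_mem_firstFalseAt {x : ℕ → Bool} {i j : ℕ} (hi : x ∈ firstFalseAt i)
    (hj : x ∈ firstFalseAt j) : i = j := by
  by_contra hne
  rcases Nat.lt_or_gt_of_ne hne with hlt | hlt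
  · simpa [hi.2] using hj.1 i hlt
  · simpa [hj.2] using hi.1 j hlt

lemma IsBernoulliProd.measure_firstFalseAt {a : ℝ} {ν : Measure (ℕ → Bool)}
    (hν : IsBernoulliProd a ν) (j : ℕ) :
    ν (firstFalseAt j) = bernoulliWeight a true ^ j * bernoulliWeight a false := by
  rw [firstFalseAt_eq_prefixCylinder, hν.measure_prefixCylinder, Finset.prod_range_succ,
    prod_range_bernoulliWeight_of_eq fun i hi => decide_eq_true hi]
  simp

-- `(a/(1-a))^(j-1)`, the density of `ν.map odometerInv` on `firstFalseAt j` (the paper's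
-- `K_{j+1}`).
noncomputable def odometerRatio (a : ℝ) (j : ℕ) : ℝ≥0∞ :=
  ENNReal.ofReal ((a / (1 - a)) ^ j * ((1 - a) / a))

lemma odometerRatio_mul {a : ℝ} (ha0 : 0 < a) (ha1 : a < 1) (j : ℕ) :
    odometerRatio a j * (bernoulliWeight a true ^ j * bernoulliWeight a false) =
      bernoulliWeight a false ^ j * bernoulliWeight a true := by
  have h1a : 0 < 1 - a := sub_pos.2 ha1
  simp only [odometerRatio, bernoulliWeight, if_true, Bool.false_eq_true, if_false]
  rw [← ENNReal.ofReal_pow h1a.le, ← ENNReal.ofReal_pow ha0.le,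
    ← ENNReal.ofReal_mul (by positivity), ← ENNReal.ofReal_mul (by positivity),
    ← ENNReal.ofReal_mul (by positivity)]
  congr 1
  rw [div_pow]
  field_simp

lemma odometerRatio_le {a : ℝ} (ha0 : 0 < a) (ha : a ≤ 1 / 2) (j : ℕ) :
    odometerRatio a j ≤ ENNReal.ofReal ((1 - a) / a) := by
  have h1a : 0 < 1 - a := by linarith
  refine ENNReal.ofReal_le_ofReal (mul_le_of_le_one_left (by positivity) ?_)
  exact pow_le_one₀ (by positivity) ((div_le_one h1a).2 (by linarith))

noncomputable def odometerDensity (a : ℝ) (x : ℕ → Bool) : ℝ≥0∞ :=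
  ∑' j, (firstFalseAt j).indicator (fun _ => odometerRatio a j) x

lemma measurable_odometerDensity (a : ℝ) : Measurable (odometerDensity a) :=
  Measurable.tsum fun j => measurable_const.indicator (measurableSet_firstFalseAt j)

lemma odometerDensity_le {a : ℝ} (ha0 : 0 < a) (ha : a ≤ 1 / 2) (x : ℕ → Bool) :
    odometerDensity a x ≤ ENNReal.ofReal ((1 - a) / a) := by
  by_cases hx : ∃ j, x ∈ firstFalseAt j
  · obtain ⟨j, hj⟩ := hx
    rw [odometerDensity, tsum_eq_single j fun k hk => Set.indicator_of_notMem
      (fun hxk => hk (eq_of_mem_firstFalseAt hxk hj)) _, Set.indicator_of_mem hj]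
    exact odometerRatio_le ha0 ha j
  · simp [odometerDensity, Set.indicator_of_notMem (not_exists.1 hx _)]

lemma withDensity_odometerDensity_apply (a : ℝ) (ν : Measure (ℕ → Bool))
    {S : Set (ℕ → Bool)} (hS : MeasurableSet S) :
    ν.withDensity (odometerDensity a) S =
      ∑' j, odometerRatio a j * ν (firstFalseAt j ∩ S) := by
  simp only [withDensity_apply _ hS, odometerDensity]
  rw [lintegral_tsum fun j =>
    (measurable_const.indicator (measurableSet_firstFalseAt j)).aemeasurable]
  congr 1 with j
  rw [lintegral_indicator (measurableSet_firstFalseAt j), setLIntegral_const,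
    Measure.restrict_apply (measurableSet_firstFalseAt j)]

lemma exists_mem_firstFalseAt_of_exists {s : ℕ → Bool} {n : ℕ} (h : ∃ i < n, s i = false) :
    ∃ m < n, s ∈ firstFalseAt m := by
  have hex : ∃ i, s i = false := h.imp fun _ hi => hi.2
  obtain ⟨i, hin, hi⟩ := h
  refine ⟨Nat.find hex, (Nat.find_le hi).trans_lt hin, fun k hk => ?_, Nat.find_spec hex⟩
  simpa using Nat.find_min hex hk

section Bernoulli

variable {a : ℝ} {ν : Measure (ℕ → Bool)}

lemma IsBernoulliProd.measure_prefixCylinder_odometer_of_mem_firstFalseAt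
    (hν : IsBernoulliProd a ν) (ha0 : 0 < a) (ha1 : a < 1) {n m : ℕ} {s : ℕ → Bool}
    (hmn : m < n) (hs : s ∈ firstFalseAt m) :
    ν (prefixCylinder n (odometer s)) = odometerRatio a m * ν (prefixCylinder n s) := by
  have hhead : ∀ i < m, odometer s i = false := fun i hi => by
    rw [odometer_apply_of_forall_lt fun k hk => hs.1 k (hk.trans hi), hs.1 i hi, Bool.not_true]
  have hflip : odometer s m = true := by
    rw [odometer_apply_of_forall_lt hs.1, hs.2, Bool.not_false]
  have htail : ∀ i ∈ Finset.Ico (m + 1) n, odometer s i = s i := fun i hi =>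
    odometer_apply_of_not_forall_lt fun h => by simpa [hs.2] using h m (Finset.mem_Ico.1 hi).1
  simp only [hν.measure_prefixCylinder, ← Finset.prod_range_mul_prod_Ico _ hmn,
    Finset.prod_range_succ, prod_range_bernoulliWeight_of_eq hhead,
    prod_range_bernoulliWeight_of_eq hs.1, hflip, hs.2, Finset.prod_congr rfl fun i hi =>
      congrArg (bernoulliWeight a) (htail i hi)]
  rw [← mul_assoc, odometerRatio_mul ha0 ha1]

lemma IsBernoulliProd.map_odometerInv_prefixCylinder (hν : IsBernoulliProd a ν) (ha0 : 0 < a)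
    (ha1 : a < 1) (n : ℕ) (s : ℕ → Bool) :
    ν.map odometerInv (prefixCylinder n s) =
      ν.withDensity (odometerDensity a) (prefixCylinder n s) := by
  rw [Measure.map_apply measurable_odometerInv (measurableSet_prefixCylinder n s),
    preimage_odometerInv_prefixCylinder,
    withDensity_odometerDensity_apply _ _ (measurableSet_prefixCylinder n s)]
  by_cases hs : ∀ i < n, s i = true
  · have hodo : ∀ i < n, odometer s i = false := fun i hi => by
      rw [odometer_apply_of_forall_lt fun k hk => hs k (hk.trans hi), hs i hi, Bool.not_true]
    have hterm : ∀ j, odometerRatio a j * ν (firstFalseAt j ∩ prefixCylinder n s) =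
        if n ≤ j then bernoulliWeight a false ^ j * bernoulliWeight a true else 0 := fun j => by
      split_ifs with hnj
      · rw [Set.inter_eq_self_of_subset_left fun x hx i hi => (hx.1 i (hi.trans_le hnj)).trans
          (hs i hi).symm, hν.measure_firstFalseAt, odometerRatio_mul ha0 ha1]
      · have hempty : firstFalseAt j ∩ prefixCylinder n s = ∅ :=
          Set.eq_empty_of_forall_notMem fun x hx => by
            simpa [hx.1.2, hs j (not_le.1 hnj)] using hx.2 j (not_le.1 hnj)
        rw [hempty, measure_empty, mul_zero]
    have hw : 1 - bernoulliWeight a false = bernoulliWeight a true := by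
      simp [bernoulliWeight, ENNReal.ofReal_sub _ ha0.le]
    rw [hν.measure_prefixCylinder, prod_range_bernoulliWeight_of_eq hodo, tsum_congr hterm, ← hw,
      ENNReal.tsum_ite_le_pow_mul_one_sub (by simpa [bernoulliWeight] using ha1)]
  · obtain ⟨m, hmn, hsm⟩ := exists_mem_firstFalseAt_of_exists (by simpa using hs)
    have hsub : prefixCylinder n s ⊆ firstFalseAt m := fun x hx =>
      ⟨fun k hk => (hx k (hk.trans hmn)).trans (hsm.1 k hk), (hx m hmn).trans hsm.2⟩
    have hempty : ∀ j ≠ m, firstFalseAt j ∩ prefixCylinder n s = ∅ := fun j hj =>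
      Set.eq_empty_of_forall_notMem fun x hx => hj (eq_of_mem_firstFalseAt hx.1 (hsub hx.2))
    rw [tsum_eq_single m fun j hj => by rw [hempty j hj, measure_empty, mul_zero],
      Set.inter_eq_self_of_subset_right hsub,
      hν.measure_prefixCylinder_odometer_of_mem_firstFalseAt ha0 ha1 hmn hsm]

lemma IsBernoulliProd.map_odometerInv_eq_withDensity (hν : IsBernoulliProd a ν) (ha0 : 0 < a)
    (ha1 : a < 1) : ν.map odometerInv = ν.withDensity (odometerDensity a) := by
  have := hν.1
  refine ext_of_generate_finite prefixCylinders generateFrom_prefixCylinders.symm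
    isPiSystem_prefixCylinders ?_ ?_
  · rintro _ ⟨n, s, rfl⟩
    exact hν.map_odometerInv_prefixCylinder ha0 ha1 n s
  · have huniv : Set.univ = prefixCylinder 0 fun _ => false := by simp [prefixCylinder]
    rw [huniv]
    exact hν.map_odometerInv_prefixCylinder ha0 ha1 0 _

end Bernoulli

/-- The Radon–Nikodym derivative `d g^{-1}_*(ν_a) / d ν_a` is essentially bounded
by `(1-a)/a`. -/
theorem rnDeriv_odometerInv_pushforward_le (a : ℝ) (ha0 : 0 < a) (ha : a ≤ 1 / 2)
    (ν : Measure (ℕ → Bool)) (hν : IsBernoulliProd a ν) :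
    ∀ᵐ x ∂ν, (Measure.map odometerInv ν).rnDeriv ν x ≤ ENNReal.ofReal ((1 - a) / a) := by
  have := hν.1
  rw [hν.map_odometerInv_eq_withDensity ha0 (by linarith)]
  filter_upwards [Measure.rnDeriv_withDensity ν (measurable_odometerDensity a)] with x hx
  exact hx ▸ odometerDensity_le ha0 ha x
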